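/- Let T be a tree, τ a generalized threshold function on T, and V_f = {u ∈ V(T) : τ(u) > deg(u)}. For every set S₀ with V_f ⊆ S₀ and every vertex v ∈ H_τ(S₀) (the set of all vertices eventually activated by S₀), there exists a target set S_v ⊇ S₀ such that the activation time of v under S_v equals the activation time of v under S₀. -/

import Mathlib

namespace TSS

variable {V : Type*}

/-- The interval (one activation step): `S` together with all vertices having
at least `τ v` neighbors in `S`. -/
def interval (G : SimpleGraph V) (τ : V → ℕ) (S : Set V) : Set V :=
  S ∪ {v | τ v ≤ (G.neighborSet v ∩ S).ncard}

/-- `S` is a target set if iterating the interval operator reaches all of `V`. -/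
def IsTargetSet (G : SimpleGraph V) (τ : V → ℕ) (S : Set V) : Prop :=
  ∃ t : ℕ, (interval G τ)^[t] S = Set.univ

/-- The activation time of a set: least `t` with `I^[t+1] S = I^[t] S`. -/
noncomputable def actTime (G : SimpleGraph V) (τ : V → ℕ) (S : Set V) : ℕ :=
  sInf {t : ℕ | (interval G τ)^[t + 1] S = (interval G τ)^[t] S}

/-- The maximum activation time over all target sets. -/
noncomputable def maxTime (G : SimpleGraph V) (τ : V → ℕ) : ℕ :=
  sSup {t : ℕ | ∃ S : Set V, IsTargetSet G τ S ∧ actTime G τ S = t}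

/-- The activation time of a vertex `v` for an initial set `S`. -/
noncomputable def vTime (G : SimpleGraph V) (τ : V → ℕ) (S : Set V) (v : V) : ℕ :=
  sInf {k : ℕ | v ∈ (interval G τ)^[k] S}

/-- The set of vertices eventually activated from `S`. -/
def hull (G : SimpleGraph V) (τ : V → ℕ) (S : Set V) : Set V :=
  {v | ∃ k : ℕ, v ∈ (interval G τ)^[k] S}

end TSS

/-!
Adding to `S` a vertex `u` outside the hull `H(S)` and farthest from `v`, repeatedly, ends with a
target set; it suffices that each such addition does not speed up `v`. Call a vertex accelerated
at time `t` if it is active at time `t` from `S ∪ {u}` but not from `S`. In a tree, acceleration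
only travels away from `u`: when a vertex first becomes active from `S ∪ {u}` while still inactive
from `S`, its only accelerated neighbour is its neighbour towards `u`. A vertex outside `H(S)`
always lacks an active neighbour and gains at most this one, so once it is accelerated its
neighbours in `H(S)` are already active from `S`; hence the path from an accelerated vertex of
`H(S)` to `u` stays in `H(S)` up to `u`. If `v` were accelerated, the neighbour of `u` towards `v` would
therefore lie in `H(S)`; the other neighbours of `u` are farther from `v` than `u`, so lie in `H(S)`
by the choice of `u`, and as `u ∉ V_f` this puts `u` itself in `H(S)`.
-/

open TSS SimpleGraph

namespace SimpleGraph.IsTree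

variable {V : Type*} {G : SimpleGraph V}

lemma length_eq_dist_of_isPath (hT : G.IsTree) {a b : V} {p : G.Walk a b} (hp : p.IsPath) :
    p.length = G.dist a b := by
  obtain ⟨q, hq, hlen⟩ := hT.connected.exists_path_of_dist a b
  obtain rfl : p = q :=
    congrArg Subtype.val ((hT.isAcyclic.subsingleton_path a b).elim ⟨p, hp⟩ ⟨q, hq⟩)
  exact hlen

lemma dist_add_one_eq_or (hT : G.IsTree) (r : V) {z w : V} (h : G.Adj z w) :
    G.dist r z + 1 = G.dist r w ∨ G.dist r w + 1 = G.dist r z := by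
  obtain ⟨p, hp, -⟩ := hT.connected.exists_path_of_dist r w
  obtain ⟨q, hq, -⟩ := hT.connected.exists_path_of_dist r z
  by_cases hz : z ∈ p.support
  · have hw : w ∉ q.support :=
      hT.isAcyclic.ne_mem_support_of_support_of_adj_of_isPath hp hq h.symm hz
    left
    rw [← hT.length_eq_dist_of_isPath hq, ← hT.length_eq_dist_of_isPath (hq.concat hw h),
      Walk.length_concat]
  · right
    rw [← hT.length_eq_dist_of_isPath hp, ← hT.length_eq_dist_of_isPath (hp.concat hz h.symm),
      Walk.length_concat]

lemma eq_of_adj_of_dist_add_one (hT : G.IsTree) {r p₁ p₂ w : V} (h₁ : G.Adj p₁ w)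
    (h₂ : G.Adj p₂ w) (d₁ : G.dist r p₁ + 1 = G.dist r w) (d₂ : G.dist r p₂ + 1 = G.dist r w) :
    p₁ = p₂ := by
  obtain ⟨q, hq, -⟩ := hT.connected.exists_path_of_dist r w
  have eq_penultimate : ∀ p, G.Adj p w → G.dist r p + 1 = G.dist r w → p = q.penultimate := by
    intro p hpw hp
    refine hT.isAcyclic.eq_penultimate_of_adj_end hq hpw.symm (not_not.1 fun hp' => ?_)
    have := hT.length_eq_dist_of_isPath (hq.concat hp' hpw.symm)
    rw [Walk.length_concat, hT.length_eq_dist_of_isPath hq] at this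
    omega
  exact (eq_penultimate p₁ h₁ d₁).trans (eq_penultimate p₂ h₂ d₂).symm

end SimpleGraph.IsTree

namespace TSS

variable {V : Type*} {G : SimpleGraph V} {τ : V → ℕ}

lemma subset_interval (S : Set V) : S ⊆ interval G τ S := Set.subset_union_left

lemma le_ncard_of_mem_interval_diff {A : Set V} {w : V} (hw : w ∈ interval G τ A \ A) :
    τ w ≤ (G.neighborSet w ∩ A).ncard :=
  hw.1.resolve_left hw.2

lemma iterate_subset_hull (S : Set V) (t : ℕ) : (interval G τ)^[t] S ⊆ hull G τ S :=
  fun _ hw => ⟨t, hw⟩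

lemma iterate_subset_of_le (S : Set V) {s t : ℕ} (h : s ≤ t) :
    (interval G τ)^[s] S ⊆ (interval G τ)^[t] S :=
  monotone_nat_of_le_succ (f := fun t => (interval G τ)^[t] S) (fun t => by
    rw [Function.iterate_succ_apply']
    exact subset_interval _) h

lemma exists_lt_mem_interval_diff {A : Set V} {w : V} {t : ℕ}
    (ht : w ∈ (interval G τ)^[t] A) (hA : w ∉ A) :
    ∃ s < t, w ∈ interval G τ ((interval G τ)^[s] A) \ (interval G τ)^[s] A := by
  induction t with
  | zero => exact absurd ht hA
  | succ t ih =>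
    by_cases h : w ∈ (interval G τ)^[t] A
    · obtain ⟨s, hs, hsw⟩ := ih h
      exact ⟨s, by omega, hsw⟩
    · rw [Function.iterate_succ_apply'] at ht
      exact ⟨t, by omega, ht, h⟩

lemma exists_lt_mem_interval_diff_of_accel {S : Set V} {u w : V} {t : ℕ}
    (hw : w ∈ (interval G τ)^[t] (insert u S) \ (interval G τ)^[t] S) (hwu : w ≠ u) :
    ∃ s < t, w ∈ interval G τ ((interval G τ)^[s] (insert u S)) \
        (interval G τ)^[s] (insert u S) ∧ w ∉ interval G τ ((interval G τ)^[s] S) := by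
  have hwS : w ∉ insert u S := fun h =>
    hw.2 (iterate_subset_of_le S (Nat.zero_le t) (h.resolve_left hwu))
  obtain ⟨s, hst, hs⟩ := exists_lt_mem_interval_diff hw.1 hwS
  refine ⟨s, hst, hs, fun h => hw.2 (iterate_subset_of_le S hst ?_)⟩
  rwa [Function.iterate_succ_apply']

section Finite

variable [Finite V]

lemma interval_mono : Monotone (interval G τ) := by
  rintro A B h w (hw | hw)
  · exact Or.inl (h hw)
  · exact Or.inr (hw.trans (Set.ncard_le_ncard (Set.inter_subset_inter_right _ h)))

lemma iterate_interval_mono (t : ℕ) : Monotone (interval G τ)^[t] :=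
  interval_mono.iterate t

lemma hull_mono : Monotone (hull G τ) := by
  rintro A B h w ⟨t, hw⟩
  exact ⟨t, iterate_interval_mono t h hw⟩

lemma exists_iterate_eq_hull (S : Set V) : ∃ t, (interval G τ)^[t] S = hull G τ S := by
  obtain ⟨n, hn⟩ := WellFoundedGT.monotone_chain_condition
    ⟨fun t => (interval G τ)^[t] S, fun _ _ => iterate_subset_of_le S⟩
  refine ⟨n, (iterate_subset_hull S n).antisymm ?_⟩
  rintro w ⟨k, hk⟩
  rcases le_total k n with h | h
  · exact iterate_subset_of_le S h hk
  · have hkn : (interval G τ)^[k] S = (interval G τ)^[n] S := (hn k h).symm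
    exact hkn ▸ hk

lemma interval_hull (S : Set V) : interval G τ (hull G τ S) = hull G τ S := by
  obtain ⟨t, ht⟩ := exists_iterate_eq_hull (G := G) (τ := τ) S
  refine (subset_interval _).antisymm' fun w hw => ⟨t + 1, ?_⟩
  rw [Function.iterate_succ_apply', ht]
  exact hw

lemma mem_hull_of_le_ncard {S : Set V} {w : V}
    (h : τ w ≤ (G.neighborSet w ∩ hull G τ S).ncard) : w ∈ hull G τ S :=
  interval_hull (G := G) S ▸ Or.inr h

lemma isTargetSet_of_hull_eq_univ {S : Set V} (h : hull G τ S = Set.univ) :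
    IsTargetSet G τ S :=
  let ⟨t, ht⟩ := exists_iterate_eq_hull S
  ⟨t, ht.trans h⟩

lemma exists_adj_mem_diff_of_mem_interval_diff {A B : Set V} {w : V}
    (hw : w ∈ interval G τ B \ B) (hwA : w ∉ interval G τ A) : ∃ z, G.Adj w z ∧ z ∈ B \ A := by
  by_contra! h
  refine hwA (Or.inr ((le_ncard_of_mem_interval_diff hw).trans (Set.ncard_le_ncard ?_)))
  exact fun z hz => ⟨hz.1, by_contra fun hzA => h z hz.1 ⟨hz.2, hzA⟩⟩

variable {S : Set V} {u : V}

lemma dist_add_one_of_accel (hT : G.IsTree) {t : ℕ} {w z : V}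
    (hw : w ∉ (interval G τ)^[t] (insert u S)) (hzw : G.Adj z w)
    (hz : z ∈ (interval G τ)^[t] (insert u S) \ (interval G τ)^[t] S) :
    G.dist u z + 1 = G.dist u w := by
  induction t using Nat.strong_induction_on generalizing w z with
  | _ t ih =>
  refine (hT.dist_add_one_eq_or u hzw).resolve_right fun hwz => hw ?_
  have hzu : z ≠ u := by
    rintro rfl
    simp at hwz
  obtain ⟨s, hst, hzs, hzsS⟩ := exists_lt_mem_interval_diff_of_accel hz hzu
  obtain ⟨z', hzz', hz'⟩ := exists_adj_mem_diff_of_mem_interval_diff hzs hzsS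
  obtain rfl := hT.eq_of_adj_of_dist_add_one hzz'.symm hzw.symm
    (ih s hst hzs.2 hzz'.symm hz') hwz
  exact iterate_subset_of_le _ hst.le hz'.1

lemma exists_accel_parent (hT : G.IsTree) {t : ℕ} {w : V}
    (hw : w ∈ interval G τ ((interval G τ)^[t] (insert u S)) \ (interval G τ)^[t] (insert u S))
    (hwS : w ∉ interval G τ ((interval G τ)^[t] S)) :
    ∃ p, G.Adj p w ∧ G.dist u p + 1 = G.dist u w ∧
      p ∈ (interval G τ)^[t] (insert u S) \ (interval G τ)^[t] S ∧
      G.neighborSet w ∩ (interval G τ)^[t] (insert u S) ⊆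
        insert p (G.neighborSet w ∩ (interval G τ)^[t] S) := by
  obtain ⟨p, hwp, hp⟩ := exists_adj_mem_diff_of_mem_interval_diff hw hwS
  have hpd := dist_add_one_of_accel hT hw.2 hwp.symm hp
  refine ⟨p, hwp.symm, hpd, hp, fun x ⟨hwx, hx⟩ => ?_⟩
  by_cases hxS : x ∈ (interval G τ)^[t] S
  · exact Or.inr ⟨hwx, hxS⟩
  · exact Or.inl (hT.eq_of_adj_of_dist_add_one hwx.symm hwp.symm
      (dist_add_one_of_accel hT hw.2 hwx.symm ⟨hx, hxS⟩) hpd)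

lemma neighborSet_inter_hull_subset_of_accel (hT : G.IsTree) {k : ℕ} {p : V} (hpu : p ≠ u)
    (hpH : p ∉ hull G τ S) (hp : p ∈ (interval G τ)^[k] (insert u S) \ (interval G τ)^[k] S) :
    G.neighborSet p ∩ hull G τ S ⊆ (interval G τ)^[k] S := by
  obtain ⟨s, hsk, hps, hpsS⟩ := exists_lt_mem_interval_diff_of_accel hp hpu
  obtain ⟨q, -, -, -, hsub⟩ := exists_accel_parent hT hps hpsS
  have hcard : (G.neighborSet p ∩ hull G τ S).ncard + 1 ≤
      (G.neighborSet p ∩ (interval G τ)^[s] S).ncard + 1 :=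
    calc (G.neighborSet p ∩ hull G τ S).ncard + 1
        ≤ τ p := not_le.1 fun h => hpH (mem_hull_of_le_ncard h)
      _ ≤ (G.neighborSet p ∩ (interval G τ)^[s] (insert u S)).ncard :=
        le_ncard_of_mem_interval_diff hps
      _ ≤ (insert q (G.neighborSet p ∩ (interval G τ)^[s] S)).ncard := Set.ncard_le_ncard hsub
      _ ≤ (G.neighborSet p ∩ (interval G τ)^[s] S).ncard + 1 := Set.ncard_insert_le _ _
  rw [← Set.eq_of_subset_of_ncard_le
    (Set.inter_subset_inter_right _ (iterate_subset_hull S s)) (by omega)]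
  exact Set.inter_subset_right.trans (iterate_subset_of_le S hsk.le)

lemma exists_adj_mem_hull_of_accel (hT : G.IsTree) {t : ℕ} {w : V}
    (hw : w ∈ (interval G τ)^[t] (insert u S) \ (interval G τ)^[t] S) (hwH : w ∈ hull G τ S)
    (hwu : w ≠ u) : ∃ c ∈ hull G τ S, G.Adj u c ∧ G.dist c w < G.dist u w := by
  induction t using Nat.strong_induction_on generalizing w with
  | _ t ih =>
  obtain ⟨s, hst, hws, hwsS⟩ := exists_lt_mem_interval_diff_of_accel hw hwu
  obtain ⟨p, hpw, hpd, hp, -⟩ := exists_accel_parent hT hws hwsS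
  by_cases hpu : p = u
  · subst hpu
    exact ⟨w, hwH, hpw, by rw [SimpleGraph.dist_self]; omega⟩
  have hpH : p ∈ hull G τ S := by
    by_contra hpH
    exact hwsS (subset_interval _
      (neighborSet_inter_hull_subset_of_accel hT hpu hpH hp ⟨hpw, hwH⟩))
  obtain ⟨c, hcH, huc, hcp⟩ := ih s hst hp hpH hpu
  refine ⟨c, hcH, huc, ?_⟩
  have := hT.connected.dist_triangle (u := c) (v := p) (w := w)
  rw [dist_eq_one_iff_adj.2 hpw] at this
  omega

lemma mem_iterate_of_mem_iterate_insert (hT : G.IsTree)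
    (hVf : {x : V | (G.neighborSet x).ncard < τ x} ⊆ S) {v : V} (hv : v ∈ hull G τ S)
    (hu : u ∉ hull G τ S) (hmax : ∀ w ∉ hull G τ S, G.dist v w ≤ G.dist v u) {t : ℕ}
    (ht : v ∈ (interval G τ)^[t] (insert u S)) : v ∈ (interval G τ)^[t] S := by
  by_contra hvt
  have hvu : v ≠ u := by
    rintro rfl
    exact hu hv
  obtain ⟨c, hcH, huc, hcv⟩ := exists_adj_mem_hull_of_accel hT ⟨ht, hvt⟩ hv hvu
  have hc : G.dist v c + 1 = G.dist v u := by
    have h₁ : G.dist c v = G.dist v c := dist_comm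
    have h₂ : G.dist u v = G.dist v u := dist_comm
    exact (hT.dist_add_one_eq_or v huc.symm).resolve_right (by omega)
  have hnbrs : G.neighborSet u ⊆ hull G τ S := by
    intro c' huc'
    by_contra hc'H
    have hc' : G.dist v c' + 1 = G.dist v u :=
      (hT.dist_add_one_eq_or v huc'.symm).resolve_right (by have := hmax c' hc'H; omega)
    exact hc'H (hT.eq_of_adj_of_dist_add_one huc.symm huc'.symm hc hc' ▸ hcH)
  have hτu : τ u ≤ (G.neighborSet u).ncard := not_lt.1 fun h => hu ⟨0, hVf h⟩
  exact hu (mem_hull_of_le_ncard (by rwa [Set.inter_eq_self_of_subset_left hnbrs]))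

lemma vTime_insert_eq (hT : G.IsTree) (hVf : {x : V | (G.neighborSet x).ncard < τ x} ⊆ S)
    {v : V} (hv : v ∈ hull G τ S) (hu : u ∉ hull G τ S)
    (hmax : ∀ w ∉ hull G τ S, G.dist v w ≤ G.dist v u) :
    vTime G τ (insert u S) v = vTime G τ S v := by
  unfold vTime
  congr 1
  ext t
  exact ⟨mem_iterate_of_mem_iterate_insert hT hVf hv hu hmax,
    fun h => iterate_interval_mono t (Set.subset_insert u S) h⟩

end Finite

end TSS

/-- in a tree with generalized threshold function, for any S₀
containing the forced set V_f and any v ∈ H(S₀), there is a target set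
S_v ⊇ S₀ activating v at the same time as S₀. -/
theorem stmt10 {V : Type*} [Fintype V] (G : SimpleGraph V) (hT : G.IsTree)
    (τ : V → ℕ) (S₀ : Set V)
    (hVf : {u : V | (G.neighborSet u).ncard < τ u} ⊆ S₀)
    (v : V) (hv : v ∈ TSS.hull G τ S₀) :
    ∃ Sv : Set V, S₀ ⊆ Sv ∧ TSS.IsTargetSet G τ Sv ∧
      TSS.vTime G τ Sv v = TSS.vTime G τ S₀ v := by
  obtain ⟨n, hn⟩ : ∃ n, (hull G τ S₀)ᶜ.ncard = n := ⟨_, rfl⟩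
  induction n using Nat.strong_induction_on generalizing S₀ with
  | _ n ih =>
  by_cases hfull : hull G τ S₀ = Set.univ
  · exact ⟨S₀, subset_rfl, isTargetSet_of_hull_eq_univ hfull, rfl⟩
  obtain ⟨u, hu, hmax⟩ := Set.exists_max_image (hull G τ S₀)ᶜ (G.dist v) (Set.toFinite _)
    (Set.nonempty_compl.2 hfull)
  have hsub : S₀ ⊆ insert u S₀ := Set.subset_insert u S₀
  have hlt : (hull G τ (insert u S₀))ᶜ.ncard < n := hn ▸ Set.ncard_lt_ncard
    (compl_lt_compl_iff_lt.2 ((Set.ssubset_iff_of_subset (hull_mono hsub)).2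
      ⟨u, ⟨0, Set.mem_insert u S₀⟩, hu⟩))
  obtain ⟨Sv, hSv, hSvT, hSvt⟩ :=
    ih _ hlt (insert u S₀) (hVf.trans hsub) (hull_mono hsub hv) rfl
  exact ⟨Sv, hsub.trans hSv, hSvT, hSvt.trans (vTime_insert_eq hT hVf hv hu hmax)⟩
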